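/- arXiv:2005.12582 — 9 statements merged into one kernel-verified Lean document; each statement's English description precedes it below -/
import Mathlib

section
/- Let I be a countable set and P ⊆ (I → ℝ≥0). Suppose P = P°° (P equals its biorthogonal) and suppose that for every a ∈ I there exist ε > 0 with ε·δ_a ∈ P and m ∈ ℝ≥0 with x(a) ≤ m for all x ∈ P. Then: (i) P is downward closed for the pointwise order; (ii) P is closed under binary convex combinations; (iii) P is ω-complete: the pointwise supremum of every pointwise-nondecreasing sequence of elements of P again lies in P. -/
open scoped NNReal ENNReal

/-- The orthogonal of a set `P ⊆ (I → ℝ≥0)`: all `y` such that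
`∑_{a} x a * y a ≤ 1` (sum in `[0,∞]`) for every `x ∈ P`. -/
def orth {I : Type*} (P : Set (I → ℝ≥0)) : Set (I → ℝ≥0) :=
  {y | ∀ x ∈ P, ∑' a : I, (x a : ℝ≥0∞) * (y a : ℝ≥0∞) ≤ 1}

private lemma tsum_iSup_mono {I : Type*} [Countable I] (f : ℕ → I → ℝ≥0∞)
    (hmono : ∀ a, Monotone fun n => f n a) :
    ∑' a : I, ⨆ n, f n a = ⨆ n, ∑' a : I, f n a := by
  refine le_antisymm ?_ (iSup_le fun n => ENNReal.tsum_le_tsum fun a => le_iSup (f · a) n)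
  rw [ENNReal.tsum_eq_iSup_sum]
  refine iSup_le fun s => ?_
  rw [ENNReal.finsetSum_iSup_of_monotone fun a => hmono a]
  exact iSup_mono fun n => ENNReal.sum_le_tsum s

/-- If `P ⊆ (I → ℝ≥0)` (with `I` countable) equals its biorthogonal and for every
coordinate `a` contains a positive multiple of `δ_a` and is bounded in the coordinate
`a`, then `P` is downward closed, closed under binary convex combinations, and
ω-complete. -/
theorem stmt1 {I : Type*} [Countable I] [DecidableEq I] (P : Set (I → ℝ≥0))
    (hbiorth : orth (orth P) = P)
    (hdelta : ∀ a : I, ∃ ε : ℝ≥0, 0 < ε ∧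
      (fun b => if b = a then ε else 0) ∈ P)
    (hbdd : ∀ a : I, ∃ m : ℝ≥0, ∀ x ∈ P, x a ≤ m) :
    (∀ x ∈ P, ∀ y : I → ℝ≥0, y ≤ x → y ∈ P) ∧
    (∀ x ∈ P, ∀ y ∈ P, ∀ t : ℝ≥0, t ≤ 1 →
      (fun a => t * x a + (1 - t) * y a) ∈ P) ∧
    (∀ u : ℕ → (I → ℝ≥0), (∀ n, u n ∈ P) → Monotone u →
      (fun a => ⨆ n, u n a) ∈ P) := by
  -- characterization of membership via the orthogonal
  have hmem : ∀ x : I → ℝ≥0,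
      (∀ z ∈ orth P, ∑' a : I, (z a : ℝ≥0∞) * (x a : ℝ≥0∞) ≤ 1) → x ∈ P := by
    intro x hx
    rw [← hbiorth]
    exact hx
  have hfwd : ∀ x ∈ P, ∀ z ∈ orth P,
      ∑' a : I, (z a : ℝ≥0∞) * (x a : ℝ≥0∞) ≤ 1 := by
    intro x hx z hz
    simpa [mul_comm] using hz x hx
  refine ⟨?_, ?_, ?_⟩
  · -- downward closed
    intro x hx y hyx
    apply hmem
    intro z hz
    refine le_trans ?_ (hfwd x hx z hz)
    exact ENNReal.tsum_le_tsum fun a =>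
      mul_le_mul_right (ENNReal.coe_le_coe.2 (hyx a)) _
  · -- convexity
    intro x hx y hy t ht
    apply hmem
    intro z hz
    have hx' := hfwd x hx z hz
    have hy' := hfwd y hy z hz
    have key : ∀ a : I,
        (z a : ℝ≥0∞) * ((t * x a + (1 - t) * y a : ℝ≥0) : ℝ≥0∞)
          = (t : ℝ≥0∞) * ((z a : ℝ≥0∞) * x a)
            + ((1 - t : ℝ≥0) : ℝ≥0∞) * ((z a : ℝ≥0∞) * y a) := by
      intro a
      push_cast
      ring
    calc ∑' a : I, (z a : ℝ≥0∞) * ((t * x a + (1 - t) * y a : ℝ≥0) : ℝ≥0∞)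
        = ∑' a : I, ((t : ℝ≥0∞) * ((z a : ℝ≥0∞) * x a)
            + ((1 - t : ℝ≥0) : ℝ≥0∞) * ((z a : ℝ≥0∞) * y a)) := by
          exact tsum_congr key
      _ = (t : ℝ≥0∞) * ∑' a : I, (z a : ℝ≥0∞) * x a
            + ((1 - t : ℝ≥0) : ℝ≥0∞) * ∑' a : I, (z a : ℝ≥0∞) * y a := by
          rw [ENNReal.tsum_add, ENNReal.tsum_mul_left, ENNReal.tsum_mul_left]
      _ ≤ (t : ℝ≥0∞) * 1 + ((1 - t : ℝ≥0) : ℝ≥0∞) * 1 := by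
          gcongr
      _ = ((t + (1 - t) : ℝ≥0) : ℝ≥0∞) := by push_cast; ring
      _ = 1 := by rw [add_tsub_cancel_of_le ht]; norm_num
  · -- ω-completeness
    intro u hu hmono
    apply hmem
    intro z hz
    have hbdd' : ∀ a : I, BddAbove (Set.range fun n => u n a) := by
      intro a
      obtain ⟨m, hm⟩ := hbdd a
      exact ⟨m, by rintro _ ⟨n, rfl⟩; exact hm (u n) (hu n)⟩
    have hcoe : ∀ a : I, ((⨆ n, u n a : ℝ≥0) : ℝ≥0∞) = ⨆ n, (u n a : ℝ≥0∞) := by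
      intro a
      exact ENNReal.coe_iSup (hbdd' a)
    calc ∑' a : I, (z a : ℝ≥0∞) * ((⨆ n, u n a : ℝ≥0) : ℝ≥0∞)
        = ∑' a : I, ⨆ n, (z a : ℝ≥0∞) * (u n a : ℝ≥0∞) := by
          refine tsum_congr fun a => ?_
          rw [hcoe a, ENNReal.mul_iSup]
      _ = ⨆ n, ∑' a : I, (z a : ℝ≥0∞) * (u n a : ℝ≥0∞) := by
          exact tsum_iSup_mono _ fun a =>
            fun n m hnm => mul_le_mul_right (ENNReal.coe_le_coe.2 (hmono hnm a)) _
      _ ≤ 1 := iSup_le fun n => hfwd (u n) (hu n) z hz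
end

section
/- Let I be a countable set and P ⊆ (I → ℝ≥0) satisfying the PCS conditions: (i) P is downward closed for the pointwise order; (ii) P is closed under binary convex combinations; (iii) P is ω-complete (the pointwise supremum of every pointwise-nondecreasing sequence of elements of P again lies in P); (iv) for every a ∈ I there exist ε > 0 with ε·δ_a ∈ P and m ∈ ℝ≥0 with x(a) ≤ m for all x ∈ P. Let x ∈ P, let W = {a ∈ I | there exists ε > 0 with x + ε·δ_a ∈ P}, and let P_x = {u : I → ℝ≥0 | u(a) = 0 for all a ∉ W, and x + u ∈ P}. Then P_x satisfies the PCS conditions relative to the index set W: it is downward closed, closed under binary convex combinations, ω-complete, and for every a ∈ W there exist ε > 0 with ε·δ_a ∈ P_x and m ∈ ℝ≥0 with u(a) ≤ m for all u ∈ P_x. -/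
open scoped NNReal

/-!
Translating by `x` carries the PCS conditions of `P` over to `{u | x + u ∈ P}`: the convex
combination of `x + u` and `x + v` is `x` plus that of `u` and `v`, and
`x + ⨆ n, s n = ⨆ n, (x + s n)` because every coordinate is bounded on `P`. Vanishing off `W`
is preserved by all three operations, and for `a ∈ W` the witness `ε` of the definition of `W`
gives `ε • δ_a ∈ P_x`.
-/

theorem NNReal.add_ciSup {ι : Sort*} [Nonempty ι] (c : ℝ≥0) {f : ι → ℝ≥0}
    (hf : BddAbove (Set.range f)) : c + ⨆ i, f i = ⨆ i, c + f i :=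
  Monotone.map_ciSup_of_continuousAt (continuous_const_add c).continuousAt
    (fun _ _ h => by gcongr) hf

theorem NNReal.add_convexComb {t : ℝ≥0} (ht : t ≤ 1) (c u v : ℝ≥0) :
    c + (t * u + (1 - t) * v) = t * (c + u) + (1 - t) * (c + v) := by
  have hc : c = t * c + (1 - t) * c := by rw [← add_mul, add_tsub_cancel_of_le ht, one_mul]
  conv_lhs => rw [hc]
  ring

section Translate

variable {I : Type*} {P : Set (I → ℝ≥0)} {x : I → ℝ≥0}

theorem add_mem_of_le (hdown : ∀ x ∈ P, ∀ y : I → ℝ≥0, y ≤ x → y ∈ P)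
    {u v : I → ℝ≥0} (hu : x + u ∈ P) (hvu : v ≤ u) : x + v ∈ P :=
  hdown _ hu _ (add_le_add_right hvu x)

theorem add_convexComb_mem
    (hconv : ∀ x ∈ P, ∀ y ∈ P, ∀ t : ℝ≥0, t ≤ 1 → (fun a => t * x a + (1 - t) * y a) ∈ P)
    {u v : I → ℝ≥0} (hu : x + u ∈ P) (hv : x + v ∈ P) {t : ℝ≥0} (ht : t ≤ 1) :
    x + (fun a => t * u a + (1 - t) * v a) ∈ P := by
  convert hconv _ hu _ hv t ht using 1
  exact funext fun a => NNReal.add_convexComb ht (x a) (u a) (v a)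

theorem add_iSup_mem
    (homega : ∀ u : ℕ → (I → ℝ≥0), (∀ n, u n ∈ P) → Monotone u → (fun a => ⨆ n, u n a) ∈ P)
    (hbdd : ∀ a : I, ∃ m : ℝ≥0, ∀ x ∈ P, x a ≤ m)
    {s : ℕ → I → ℝ≥0} (hs : ∀ n, x + s n ∈ P) (hmono : Monotone s) :
    x + (fun a => ⨆ n, s n a) ∈ P := by
  convert homega (fun n => x + s n) hs (fun _ _ h => add_le_add_right (hmono h) x) using 1
  funext a
  obtain ⟨m, hm⟩ := hbdd a
  refine NNReal.add_ciSup (x a) ⟨m, ?_⟩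
  rintro _ ⟨n, rfl⟩
  exact le_add_self.trans (hm _ (hs n))

end Translate

theorem stmt5_general {I : Type*} [DecidableEq I] (P : Set (I → ℝ≥0))
    (hdown : ∀ x ∈ P, ∀ y : I → ℝ≥0, y ≤ x → y ∈ P)
    (hconv : ∀ x ∈ P, ∀ y ∈ P, ∀ t : ℝ≥0, t ≤ 1 →
      (fun a => t * x a + (1 - t) * y a) ∈ P)
    (homega : ∀ u : ℕ → (I → ℝ≥0), (∀ n, u n ∈ P) → Monotone u →
      (fun a => ⨆ n, u n a) ∈ P)
    (hbdd : ∀ a : I, ∃ m : ℝ≥0, ∀ x ∈ P, x a ≤ m)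
    (x : I → ℝ≥0)
    (W : Set I)
    (hW : W = {a : I | ∃ ε : ℝ≥0, 0 < ε ∧
      (fun b => x b + (if b = a then ε else 0)) ∈ P})
    (Px : Set (I → ℝ≥0))
    (hPx : Px = {u : I → ℝ≥0 | (∀ a ∉ W, u a = 0) ∧ (fun a => x a + u a) ∈ P}) :
    (∀ u ∈ Px, ∀ v : I → ℝ≥0, v ≤ u → v ∈ Px) ∧
    (∀ u ∈ Px, ∀ v ∈ Px, ∀ t : ℝ≥0, t ≤ 1 →
      (fun a => t * u a + (1 - t) * v a) ∈ Px) ∧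
    (∀ s : ℕ → (I → ℝ≥0), (∀ n, s n ∈ Px) → Monotone s →
      (fun a => ⨆ n, s n a) ∈ Px) ∧
    (∀ a ∈ W, ∃ ε : ℝ≥0, 0 < ε ∧ (fun b => if b = a then ε else 0) ∈ Px) ∧
    (∀ a ∈ W, ∃ m : ℝ≥0, ∀ u ∈ Px, u a ≤ m) := by
  subst hPx
  refine ⟨?_, ?_, ?_, ?_, ?_⟩
  · rintro u ⟨hu0, huP⟩ v hvu
    exact ⟨fun a ha => le_antisymm ((hvu a).trans_eq (hu0 a ha)) zero_le,
      add_mem_of_le hdown huP hvu⟩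
  · rintro u ⟨hu0, huP⟩ v ⟨hv0, hvP⟩ t ht
    exact ⟨fun a ha => by simp [hu0 a ha, hv0 a ha], add_convexComb_mem hconv huP hvP ht⟩
  · intro s hs hmono
    exact ⟨fun a ha => by simp [fun n => (hs n).1 a ha],
      add_iSup_mem homega hbdd (fun n => (hs n).2) hmono⟩
  · intro a ha
    obtain ⟨ε, hε, hεP⟩ := hW ▸ ha
    refine ⟨ε, hε, fun b hb => ?_, hεP⟩
    simp [show b ≠ a from fun hba => hb (hba ▸ ha)]
  · intro a _
    obtain ⟨m, hm⟩ := hbdd a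
    exact ⟨m, fun u hu => le_add_self.trans (hm _ hu.2)⟩

/-- Local PCS: if `P ⊆ (I → ℝ≥0)` satisfies the PCS conditions and `x ∈ P`, then the
local set `P_x` (supported on the web `W` of directions in which one can move from `x`
while staying in `P`) satisfies the PCS conditions relative to the index set `W`. -/
theorem stmt5 {I : Type*} [Countable I] [DecidableEq I] (P : Set (I → ℝ≥0))
    (hdown : ∀ x ∈ P, ∀ y : I → ℝ≥0, y ≤ x → y ∈ P)
    (hconv : ∀ x ∈ P, ∀ y ∈ P, ∀ t : ℝ≥0, t ≤ 1 →
      (fun a => t * x a + (1 - t) * y a) ∈ P)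
    (homega : ∀ u : ℕ → (I → ℝ≥0), (∀ n, u n ∈ P) → Monotone u →
      (fun a => ⨆ n, u n a) ∈ P)
    (hdelta : ∀ a : I, ∃ ε : ℝ≥0, 0 < ε ∧
      (fun b => if b = a then ε else 0) ∈ P)
    (hbdd : ∀ a : I, ∃ m : ℝ≥0, ∀ x ∈ P, x a ≤ m)
    (x : I → ℝ≥0) (hx : x ∈ P)
    (W : Set I)
    (hW : W = {a : I | ∃ ε : ℝ≥0, 0 < ε ∧
      (fun b => x b + (if b = a then ε else 0)) ∈ P})
    (Px : Set (I → ℝ≥0))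
    (hPx : Px = {u : I → ℝ≥0 | (∀ a ∉ W, u a = 0) ∧ (fun a => x a + u a) ∈ P}) :
    (∀ u ∈ Px, ∀ v : I → ℝ≥0, v ≤ u → v ∈ Px) ∧
    (∀ u ∈ Px, ∀ v ∈ Px, ∀ t : ℝ≥0, t ≤ 1 →
      (fun a => t * u a + (1 - t) * v a) ∈ Px) ∧
    (∀ s : ℕ → (I → ℝ≥0), (∀ n, s n ∈ Px) → Monotone s →
      (fun a => ⨆ n, s n a) ∈ Px) ∧
    (∀ a ∈ W, ∃ ε : ℝ≥0, 0 < ε ∧ (fun b => if b = a then ε else 0) ∈ Px) ∧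
    (∀ a ∈ W, ∃ m : ℝ≥0, ∀ u ∈ Px, u a ≤ m) :=
  stmt5_general P hdown hconv homega hbdd x W hW Px hPx
end

section
/- Let I be a countable set and c : (I →₀ ℕ) → ℝ≥0 a family of coefficients indexed by finitely supported multi-indices; let f(z) = ∑_μ c_μ · z^μ ∈ [0,∞] for z : I → ℝ≥0. Then for all x, u : I → ℝ≥0 one has, in [0,∞]: f(x) + ∑_{a∈I} u(a) · ( ∑_μ (μ(a)+1) · c_{μ+δ_a} · x^μ ) ≤ f(x+u), where μ + δ_a is the multi-index μ with its value at a increased by 1. -/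
/-!
Each monomial satisfies `x^μ + ∑_a μ(a) u(a) x^(μ - δ_a) ≤ (x + u)^μ`: the left side is the part
of the expansion of `∏_a (x(a) + u(a))^μ(a)` of degree at most one in `u`, and all other terms are
nonnegative. Multiplying by `c_μ` and summing over `μ` gives the theorem once the linear terms are
reindexed by `μ ↦ μ + δ_a`; in `[0,∞]` all sums may be exchanged freely.
-/

open scoped NNReal ENNReal

noncomputable def powerSeries {I : Type*} (c : (I →₀ ℕ) → ℝ≥0) (z : I → ℝ≥0) : ℝ≥0∞ :=
  ∑' μ : I →₀ ℕ, (c μ : ℝ≥0∞) * μ.prod (fun a n => (z a : ℝ≥0∞) ^ n)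

open Finset

section CanonicallyOrdered

variable {ι R : Type*} [CommSemiring R] [PartialOrder R] [CanonicallyOrderedAdd R]

theorem Finset.prod_add_sum_mul_prod_erase_le_prod_add [DecidableEq ι] (s : Finset ι)
    (f g : ι → R) :
    ∏ i ∈ s, f i + ∑ i ∈ s, g i * ∏ j ∈ s.erase i, f j ≤ ∏ i ∈ s, (f i + g i) := by
  have := CanonicallyOrderedAdd.toIsOrderedMonoid (R := R)
  induction s using Finset.induction_on with
  | empty => simp
  | insert k s hk ih =>
    have herase : ∀ i ∈ s, ∏ j ∈ (insert k s).erase i, f j = f k * ∏ j ∈ s.erase i, f j :=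
      fun i hi => by
        rw [erase_insert_of_ne (ne_of_mem_of_not_mem hi hk).symm,
          prod_insert (fun h => hk (mem_of_mem_erase h))]
    have hmono : ∏ i ∈ s, f i ≤ ∏ i ∈ s, (f i + g i) := prod_le_prod' fun i _ => le_self_add
    rw [prod_insert hk, sum_insert hk, erase_insert hk, prod_insert hk,
      sum_congr rfl fun i hi => by rw [herase i hi]]
    calc _ = f k * (∏ i ∈ s, f i + ∑ i ∈ s, g i * ∏ j ∈ s.erase i, f j)
            + g k * ∏ i ∈ s, f i := by
          rw [mul_add, mul_sum]; simp only [mul_left_comm (f k)]; ring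
      _ ≤ f k * ∏ i ∈ s, (f i + g i) + g k * ∏ i ∈ s, (f i + g i) := by gcongr
      _ = _ := (add_mul _ _ _).symm

theorem pow_add_mul_pow_pred_le_add_pow (a b : R) (n : ℕ) :
    a ^ n + n * b * a ^ (n - 1) ≤ (a + b) ^ n := by
  classical
  have h := (range n).prod_add_sum_mul_prod_erase_le_prod_add (fun _ => a) (fun _ => b)
  rw [mul_assoc]
  rwa [sum_congr rfl fun i hi => by rw [prod_const, card_erase_of_mem hi, card_range],
    sum_const, card_range, nsmul_eq_mul, prod_const, prod_const, card_range] at h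

theorem Finsupp.prod_tsub_single_pow [DecidableEq ι] {M : Type*} [CommMonoid M]
    (μ : ι →₀ ℕ) (X : ι → M) {a : ι} (ha : a ∈ μ.support) :
    (μ - single a 1).prod (fun b n => X b ^ n) =
      X a ^ (μ a - 1) * ∏ b ∈ μ.support.erase a, X b ^ μ b := by
  rw [prod_of_support_subset _ support_tsub _ fun b _ => pow_zero _,
    ← Finset.mul_prod_erase _ _ ha]
  congr 1
  · rw [tsub_apply, single_eq_same]
  · refine Finset.prod_congr rfl fun b hb => ?_
    rw [tsub_apply, single_eq_of_ne' (ne_of_mem_erase hb).symm, Nat.sub_zero]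

theorem Finsupp.prod_pow_add_sum_le_prod_add_pow [DecidableEq ι] (μ : ι →₀ ℕ) (X U : ι → R) :
    μ.prod (fun b n => X b ^ n) +
        ∑ a ∈ μ.support, μ a * U a * (μ - single a 1).prod (fun b n => X b ^ n) ≤
      μ.prod (fun b n => (X b + U b) ^ n) := by
  have := CanonicallyOrderedAdd.toIsOrderedMonoid (R := R)
  calc _ = ∏ b ∈ μ.support, X b ^ μ b +
        ∑ a ∈ μ.support, μ a * U a * X a ^ (μ a - 1) * ∏ b ∈ μ.support.erase a, X b ^ μ b := by
        rw [Finsupp.prod]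
        congr 1
        refine Finset.sum_congr rfl fun a ha => ?_
        rw [prod_tsub_single_pow μ X ha]
        ring
    _ ≤ ∏ b ∈ μ.support, (X b ^ μ b + μ b * U b * X b ^ (μ b - 1)) :=
        prod_add_sum_mul_prod_erase_le_prod_add _ _ _
    _ ≤ _ := prod_le_prod' fun b _ => pow_add_mul_pow_pred_le_add_pow _ _ _

end CanonicallyOrdered

theorem Finsupp.tsum_add_single_one {ι M : Type*} [AddCommMonoid M] [TopologicalSpace M]
    (f : (ι →₀ ℕ) → M) (a : ι) (hf : ∀ μ, μ a = 0 → f μ = 0) :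
    ∑' ν, f (ν + single a 1) = ∑' μ, f μ := by
  refine (add_left_injective _).tsum_eq fun μ hμ => ⟨μ - single a 1, tsub_add_cancel_of_le ?_⟩
  exact single_le_iff.2 (Nat.one_le_iff_ne_zero.2 fun h => hμ (hf μ h))

theorem stmt6_general {I : Type*} (c : (I →₀ ℕ) → ℝ≥0) (x u : I → ℝ≥0) :
    powerSeries c x +
      ∑' a : I, (u a : ℝ≥0∞) *
        ∑' μ : I →₀ ℕ, ((μ a : ℝ≥0∞) + 1) * (c (μ + Finsupp.single a 1) : ℝ≥0∞) *
          μ.prod (fun b n => (x b : ℝ≥0∞) ^ n)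
    ≤ powerSeries c (fun a => x a + u a) := by
  classical
  have hshift (a : I) : (u a : ℝ≥0∞) *
      ∑' μ : I →₀ ℕ, ((μ a : ℝ≥0∞) + 1) * (c (μ + Finsupp.single a 1) : ℝ≥0∞) *
        μ.prod (fun b n => (x b : ℝ≥0∞) ^ n) =
      ∑' μ : I →₀ ℕ, (c μ : ℝ≥0∞) * (μ a * u a *
        (μ - Finsupp.single a 1).prod (fun b n => (x b : ℝ≥0∞) ^ n)) := by
    rw [← ENNReal.tsum_mul_left]
    refine Eq.trans ?_ (Finsupp.tsum_add_single_one _ a fun μ h => by simp [h])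
    refine tsum_congr fun ν => ?_
    simp only [add_tsub_cancel_right, Finsupp.add_apply, Finsupp.single_eq_same]
    push_cast
    ring
  rw [tsum_congr hshift, ENNReal.tsum_comm, powerSeries, powerSeries, ← ENNReal.tsum_add]
  refine ENNReal.tsum_le_tsum fun μ => ?_
  rw [tsum_eq_sum (s := μ.support) fun a ha => by simp [Finsupp.notMem_support_iff.1 ha],
    ← mul_sum, ← mul_add]
  push_cast
  gcongr
  exact μ.prod_pow_add_sum_le_prod_add_pow _ _

/-- The constant plus linear part of the expansion of `f(x+u)` is bounded by `f(x+u)`: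
`f(x) + ∑_a u a * (∑_μ (μ a + 1) * c_{μ + δ_a} * x^μ) ≤ f(x+u)`. -/
theorem stmt6 {I : Type*} [Countable I] (c : (I →₀ ℕ) → ℝ≥0) (x u : I → ℝ≥0) :
    powerSeries c x +
      ∑' a : I, (u a : ℝ≥0∞) *
        ∑' μ : I →₀ ℕ, ((μ a : ℝ≥0∞) + 1) * (c (μ + Finsupp.single a 1) : ℝ≥0∞) *
          μ.prod (fun b n => (x b : ℝ≥0∞) ^ n)
    ≤ powerSeries c (fun a => x a + u a) :=
  stmt6_general c x u
end

section
/- Let k ∈ ℕ and c : (Fin k →₀ ℕ) → ℝ≥0 with ∑_μ c_μ ≤ 1; define f(x) = ∑_μ c_μ · x^μ ∈ ℝ for x ∈ [0,1]^k (the series converges since the coefficients sum to at most 1 and each monomial is at most 1). Let p ∈ [0,1) and let x, y ∈ [0,1]^k satisfy x ≤ y pointwise and y_i ≤ p for all i. Then 0 ≤ f(y) − f(x) ≤ (max_i (y_i − x_i)) / (1 − p). -/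
open scoped NNReal ENNReal


lemma aux1 (p a b M : ℝ) (hp1 : p ≤ 1) (ha : 0 ≤ a) (hab : a ≤ b) (hbp : b ≤ p)
    (hM : b - a ≤ M) (hM0 : 0 ≤ M) (n : ℕ) :
    (1 - p) * (b ^ n - a ^ n) ≤ M * (1 - p ^ n) := by
  have hp0 : 0 ≤ p := le_trans (ha.trans hab) hbp
  induction n with
  | zero => simp
  | succ n ih =>
    have hb0 : 0 ≤ b := ha.trans hab
    have hpow : a ^ n ≤ p ^ n := pow_le_pow_left₀ ha (hab.trans hbp) n
    have hba : a ^ n ≤ b ^ n := pow_le_pow_left₀ ha hab n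
    have hpn0 : 0 ≤ p ^ n := pow_nonneg hp0 n
    have hpn1 : p ^ n ≤ 1 := pow_le_one₀ hp0 hp1
    have key : (1 - p) * (b ^ (n+1) - a ^ (n+1)) =
        b * ((1 - p) * (b ^ n - a ^ n)) + (1 - p) * ((b - a) * a ^ n) := by ring
    rw [key]
    have h1 : b * ((1 - p) * (b ^ n - a ^ n)) ≤ p * (M * (1 - p ^ n)) := by
      apply mul_le_mul hbp ih (by nlinarith) hp0
    have h2 : (1 - p) * ((b - a) * a ^ n) ≤ (1 - p) * (M * p ^ n) := by
      apply mul_le_mul_of_nonneg_left _ (by linarith)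
      exact mul_le_mul hM hpow (pow_nonneg ha n) hM0
    have : p ^ (n+1) = p * p ^ n := by ring
    nlinarith [mul_nonneg hM0 (mul_nonneg (by linarith : (0:ℝ) ≤ 1 - p) (by linarith : (0:ℝ) ≤ 1 - p ^ n))]

lemma aux2 {ι : Type*} (s : Finset ι) (p M : ℝ) (x y : ι → ℝ) (μ : ι → ℕ)
    (hp0 : 0 ≤ p) (hp1 : p ≤ 1) (hx0 : ∀ i, 0 ≤ x i) (hxy : ∀ i, x i ≤ y i)
    (hyp : ∀ i, y i ≤ p) (hM : ∀ i, y i - x i ≤ M) (hM0 : 0 ≤ M) :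
    (1 - p) * (∏ i ∈ s, y i ^ μ i - ∏ i ∈ s, x i ^ μ i) ≤ M * (1 - p ^ (∑ i ∈ s, μ i)) := by
  classical
  induction s using Finset.induction with
  | empty => simp
  | @insert a s ha ih =>
    rw [Finset.prod_insert ha, Finset.prod_insert ha, Finset.sum_insert ha]
    set n := μ a
    set S := ∑ i ∈ s, μ i with hS
    set Py := ∏ i ∈ s, y i ^ μ i with hPy
    set Px := ∏ i ∈ s, x i ^ μ i with hPx
    have hxle : ∀ i, x i ≤ p := fun i => (hxy i).trans (hyp i)
    have hPx0 : 0 ≤ Px := Finset.prod_nonneg fun i _ => pow_nonneg (hx0 i) _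
    have hPy0 : 0 ≤ Py := Finset.prod_nonneg fun i _ => pow_nonneg ((hx0 i).trans (hxy i)) _
    have hPxPy : Px ≤ Py := Finset.prod_le_prod (fun i _ => pow_nonneg (hx0 i) _)
      (fun i _ => pow_le_pow_left₀ (hx0 i) (hxy i) _)
    have hPxp : Px ≤ p ^ S := by
      rw [hS, ← Finset.prod_pow_eq_pow_sum]
      exact Finset.prod_le_prod (fun i _ => pow_nonneg (hx0 i) _)
        (fun i _ => pow_le_pow_left₀ (hx0 i) (hxle i) _)
    have hyn : y a ^ n ≤ p ^ n := pow_le_pow_left₀ ((hx0 a).trans (hxy a)) (hyp a) n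
    have hpn0 : 0 ≤ p ^ n := pow_nonneg hp0 n
    have hpS0 : 0 ≤ p ^ S := pow_nonneg hp0 S
    have hpn1 : p ^ n ≤ 1 := pow_le_one₀ hp0 hp1
    have hpS1 : p ^ S ≤ 1 := pow_le_one₀ hp0 hp1
    have key : (1 - p) * (y a ^ n * Py - x a ^ n * Px) =
        y a ^ n * ((1 - p) * (Py - Px)) + ((1 - p) * (y a ^ n - x a ^ n)) * Px := by ring
    rw [key]
    have h1 : y a ^ n * ((1 - p) * (Py - Px)) ≤ p ^ n * (M * (1 - p ^ S)) := by
      apply mul_le_mul hyn ih (by nlinarith) hpn0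
    have haux : (1 - p) * (y a ^ n - x a ^ n) ≤ M * (1 - p ^ n) :=
      aux1 p (x a) (y a) M hp1 (hx0 a) (hxy a) (hyp a) (hM a) hM0 n
    have h2 : ((1 - p) * (y a ^ n - x a ^ n)) * Px ≤ (M * (1 - p ^ n)) * p ^ S := by
      apply mul_le_mul haux hPxp hPx0 (by nlinarith)
    have hadd : p ^ (n + S) = p ^ n * p ^ S := pow_add p n S
    nlinarith [mul_nonneg hM0 (mul_nonneg (by linarith : (0:ℝ) ≤ 1 - p ^ n) (by linarith : (0:ℝ) ≤ 1 - p ^ S))]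

/-- A multivariate power series with nonnegative coefficients summing to at most `1`
is monotone, and on the ball of radius `p < 1` (for the sup-norm, with comparable
arguments `x ≤ y`) one has `0 ≤ f(y) − f(x) ≤ (max_i (y_i − x_i))/(1−p)`. -/
theorem stmt10 (k : ℕ) (c : (Fin k →₀ ℕ) → ℝ≥0)
    (hc : ∑' μ : Fin k →₀ ℕ, (c μ : ℝ≥0∞) ≤ 1)
    (p : ℝ) (hp0 : 0 ≤ p) (hp1 : p < 1)
    (x y : Fin k → ℝ) (hx0 : ∀ i, 0 ≤ x i) (hxy : ∀ i, x i ≤ y i)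
    (hyp : ∀ i, y i ≤ p) :
    0 ≤ (∑' μ : Fin k →₀ ℕ, (c μ : ℝ) * ∏ i : Fin k, y i ^ μ i) -
        (∑' μ : Fin k →₀ ℕ, (c μ : ℝ) * ∏ i : Fin k, x i ^ μ i) ∧
    (∑' μ : Fin k →₀ ℕ, (c μ : ℝ) * ∏ i : Fin k, y i ^ μ i) -
        (∑' μ : Fin k →₀ ℕ, (c μ : ℝ) * ∏ i : Fin k, x i ^ μ i) ≤
      (⨆ i : Fin k, (y i - x i)) / (1 - p) := by
  have hy0 : ∀ i, 0 ≤ y i := fun i => (hx0 i).trans (hxy i)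
  have hxp : ∀ i, x i ≤ 1 := fun i => ((hxy i).trans (hyp i)).trans hp1.le
  have hyp1 : ∀ i, y i ≤ 1 := fun i => (hyp i).trans hp1.le
  set M : ℝ := ⨆ i : Fin k, (y i - x i) with hMdef
  have hM0 : 0 ≤ M := Real.iSup_nonneg fun i => sub_nonneg.2 (hxy i)
  have hM : ∀ i, y i - x i ≤ M := fun i => le_ciSup (f := fun i => y i - x i) (Set.Finite.bddAbove (Set.finite_range _)) i
  have h1p : (0:ℝ) < 1 - p := by linarith
  set L : ℝ := M / (1 - p) with hLdef
  have hL0 : 0 ≤ L := div_nonneg hM0 h1p.le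
  -- summability of coefficients
  have hsnn : Summable c := by
    apply ENNReal.tsum_coe_ne_top_iff_summable.mp
    exact ne_top_of_le_ne_top ENNReal.one_ne_top hc
  have hs : Summable fun μ => (c μ : ℝ) := NNReal.summable_coe.mpr hsnn
  have hsum1 : ∑' μ, (c μ : ℝ) ≤ 1 := by
    have h2 : (↑(∑' μ, c μ) : ℝ≥0∞) ≤ 1 := by rwa [← ENNReal.coe_tsum hsnn] at hc
    have h3 : (∑' μ, c μ : ℝ≥0) ≤ 1 := by exact_mod_cast h2
    calc ∑' μ, (c μ : ℝ) = ((∑' μ, c μ : ℝ≥0) : ℝ) := (NNReal.coe_tsum).symm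
      _ ≤ 1 := by exact_mod_cast h3
  -- monomial bounds
  have hPx0 : ∀ μ : Fin k →₀ ℕ, (0:ℝ) ≤ ∏ i, x i ^ μ i :=
    fun μ => Finset.prod_nonneg fun i _ => pow_nonneg (hx0 i) _
  have hPy0 : ∀ μ : Fin k →₀ ℕ, (0:ℝ) ≤ ∏ i, y i ^ μ i :=
    fun μ => Finset.prod_nonneg fun i _ => pow_nonneg (hy0 i) _
  have hPx1 : ∀ μ : Fin k →₀ ℕ, (∏ i, x i ^ μ i : ℝ) ≤ 1 :=
    fun μ => Finset.prod_le_one (fun i _ => pow_nonneg (hx0 i) _)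
      (fun i _ => pow_le_one₀ (hx0 i) (hxp i))
  have hPy1 : ∀ μ : Fin k →₀ ℕ, (∏ i, y i ^ μ i : ℝ) ≤ 1 :=
    fun μ => Finset.prod_le_one (fun i _ => pow_nonneg (hy0 i) _)
      (fun i _ => pow_le_one₀ (hy0 i) (hyp1 i))
  have hmono : ∀ μ : Fin k →₀ ℕ, (∏ i, x i ^ μ i : ℝ) ≤ ∏ i, y i ^ μ i :=
    fun μ => Finset.prod_le_prod (fun i _ => pow_nonneg (hx0 i) _)
      (fun i _ => pow_le_pow_left₀ (hx0 i) (hxy i) _)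
  -- summability of the two series
  have hfsum : Summable fun μ : Fin k →₀ ℕ => (c μ : ℝ) * ∏ i, x i ^ μ i := by
    apply Summable.of_nonneg_of_le (fun μ => mul_nonneg (c μ).2 (hPx0 μ)) _ hs
    intro μ
    calc (c μ : ℝ) * ∏ i, x i ^ μ i ≤ (c μ : ℝ) * 1 :=
          mul_le_mul_of_nonneg_left (hPx1 μ) (c μ).2
      _ = (c μ : ℝ) := mul_one _
  have hgsum : Summable fun μ : Fin k →₀ ℕ => (c μ : ℝ) * ∏ i, y i ^ μ i := by
    apply Summable.of_nonneg_of_le (fun μ => mul_nonneg (c μ).2 (hPy0 μ)) _ hs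
    intro μ
    calc (c μ : ℝ) * ∏ i, y i ^ μ i ≤ (c μ : ℝ) * 1 :=
          mul_le_mul_of_nonneg_left (hPy1 μ) (c μ).2
      _ = (c μ : ℝ) := mul_one _
  have hdiff : (∑' μ : Fin k →₀ ℕ, (c μ : ℝ) * ∏ i, y i ^ μ i) -
      (∑' μ : Fin k →₀ ℕ, (c μ : ℝ) * ∏ i, x i ^ μ i) =
      ∑' μ : Fin k →₀ ℕ, ((c μ : ℝ) * ∏ i, y i ^ μ i - (c μ : ℝ) * ∏ i, x i ^ μ i) :=
    (Summable.tsum_sub hgsum hfsum).symm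
  -- per-term bound
  have hterm : ∀ μ : Fin k →₀ ℕ,
      (c μ : ℝ) * ∏ i, y i ^ μ i - (c μ : ℝ) * ∏ i, x i ^ μ i ≤ (c μ : ℝ) * L := by
    intro μ
    have haux : (1 - p) * ((∏ i, y i ^ μ i) - ∏ i, x i ^ μ i) ≤
        M * (1 - p ^ (∑ i, μ i)) :=
      aux2 Finset.univ p M x y (fun i => μ i) hp0 hp1.le hx0 hxy hyp hM hM0
    have hpS : (0:ℝ) ≤ p ^ (∑ i, μ i) := pow_nonneg hp0 _
    have hkey : (∏ i, y i ^ μ i) - ∏ i, x i ^ μ i ≤ L := by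
      rw [hLdef, le_div_iff₀ h1p]
      nlinarith
    calc (c μ : ℝ) * ∏ i, y i ^ μ i - (c μ : ℝ) * ∏ i, x i ^ μ i
        = (c μ : ℝ) * ((∏ i, y i ^ μ i) - ∏ i, x i ^ μ i) := by ring
      _ ≤ (c μ : ℝ) * L := mul_le_mul_of_nonneg_left hkey (c μ).2
  constructor
  · rw [hdiff]
    exact tsum_nonneg fun μ =>
      sub_nonneg.2 (mul_le_mul_of_nonneg_left (hmono μ) (c μ).2)
  · rw [hdiff]
    calc ∑' μ : Fin k →₀ ℕ, ((c μ : ℝ) * ∏ i, y i ^ μ i - (c μ : ℝ) * ∏ i, x i ^ μ i)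
        ≤ ∑' μ : Fin k →₀ ℕ, (c μ : ℝ) * L :=
          Summable.tsum_le_tsum hterm (hgsum.sub hfsum) (hs.mul_right L)
      _ = (∑' μ : Fin k →₀ ℕ, (c μ : ℝ)) * L := tsum_mul_right
      _ ≤ 1 * L := mul_le_mul_of_nonneg_right hsum1 hL0
      _ = L := one_mul L
end

section
/- Let k ∈ ℕ and c : (Fin k →₀ ℕ) → ℝ≥0 with ∑_μ c_μ ≤ 1; define f(x) = ∑_μ c_μ · x^μ ∈ ℝ for x ∈ [0,1]^k (the series converges since the coefficients sum to at most 1 and each monomial is at most 1). Let p ∈ [0,1) and let x, y ∈ [0,1]^k satisfy x_i ≤ p and y_i ≤ p for all i. Then |f(x) − f(y)| ≤ ( max_i (x_i − min(x_i, y_i)) + max_i (y_i − min(x_i, y_i)) ) / (1 − p). -/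
open scoped NNReal ENNReal

lemma pow_abs_sub_le (p : ℝ) (hp0 : 0 ≤ p) (hp1 : p ≤ 1)
    (a b D : ℝ) (ha : 0 ≤ a) (hap : a ≤ p) (hb : 0 ≤ b) (hbp : b ≤ p)
    (hD : |a - b| ≤ D) : ∀ n : ℕ, |a ^ n - b ^ n| * (1 - p) ≤ D * (1 - p ^ n) := by
  have hD0 : 0 ≤ D := le_trans (abs_nonneg _) hD
  intro n
  induction n with
  | zero => simp
  | succ n ih =>
    have key : a ^ (n+1) - b ^ (n+1) = (a - b) * b ^ n + a * (a ^ n - b ^ n) := by ring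
    have htri : |a ^ (n+1) - b ^ (n+1)| ≤ |a - b| * b ^ n + a * |a ^ n - b ^ n| := by
      rw [key]
      refine le_trans (abs_add_le _ _) ?_
      rw [abs_mul, abs_mul, abs_of_nonneg (pow_nonneg hb n), abs_of_nonneg ha]
    have hbn : b ^ n ≤ p ^ n := pow_le_pow_left₀ hb hbp n
    have hpn1 : p ^ n ≤ 1 := pow_le_one₀ hp0 hp1
    have hpn0 : 0 ≤ p ^ n := pow_nonneg hp0 n
    have h1p : 0 ≤ 1 - p := by linarith
    have h1 : |a - b| * b ^ n * (1 - p) ≤ D * p ^ n * (1 - p) :=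
      mul_le_mul_of_nonneg_right
        (mul_le_mul hD hbn (pow_nonneg hb n) hD0) h1p
    have h2 : a * (|a ^ n - b ^ n| * (1 - p)) ≤ p * (D * (1 - p ^ n)) :=
      mul_le_mul hap ih (by positivity) hp0
    calc |a ^ (n+1) - b ^ (n+1)| * (1 - p)
        ≤ (|a - b| * b ^ n + a * |a ^ n - b ^ n|) * (1 - p) :=
          mul_le_mul_of_nonneg_right htri h1p
      _ = |a - b| * b ^ n * (1 - p) + a * (|a ^ n - b ^ n| * (1 - p)) := by ring
      _ ≤ D * p ^ n * (1 - p) + p * (D * (1 - p ^ n)) := add_le_add h1 h2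
      _ ≤ D * (1 - p ^ (n+1)) := by
          nlinarith [mul_nonneg (mul_nonneg hD0 h1p) (sub_nonneg.2 hpn1), pow_succ p n]

lemma prod_pow_abs_sub_le {k : ℕ} (p : ℝ) (hp0 : 0 ≤ p) (hp1 : p ≤ 1)
    (x y : Fin k → ℝ) (hx0 : ∀ i, 0 ≤ x i) (hy0 : ∀ i, 0 ≤ y i)
    (hxp : ∀ i, x i ≤ p) (hyp : ∀ i, y i ≤ p)
    (D : ℝ) (hD0 : 0 ≤ D) (hD : ∀ i, |x i - y i| ≤ D) (μ : Fin k → ℕ)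
    (s : Finset (Fin k)) :
    |(∏ i ∈ s, x i ^ μ i) - ∏ i ∈ s, y i ^ μ i| * (1 - p) ≤
      D * (1 - p ^ (∑ i ∈ s, μ i)) := by
  induction s using Finset.induction with
  | empty => simp
  | @insert a s ha ih =>
    rw [Finset.prod_insert ha, Finset.prod_insert ha, Finset.sum_insert ha]
    set A := ∏ i ∈ s, x i ^ μ i with hA
    set B := ∏ i ∈ s, y i ^ μ i with hB
    set N := ∑ i ∈ s, μ i with hN
    have hB0 : 0 ≤ B := Finset.prod_nonneg fun i _ => pow_nonneg (hy0 i) _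
    have hBp : B ≤ p ^ N := by
      rw [hB, hN, ← Finset.prod_pow_eq_pow_sum]
      exact Finset.prod_le_prod (fun i _ => pow_nonneg (hy0 i) _)
        (fun i _ => pow_le_pow_left₀ (hy0 i) (hyp i) _)
    have hxa : 0 ≤ x a ^ μ a := pow_nonneg (hx0 a) _
    have hxap : x a ^ μ a ≤ p ^ μ a := pow_le_pow_left₀ (hx0 a) (hxp a) _
    have h1p : 0 ≤ 1 - p := by linarith
    have hpm0 : (0:ℝ) ≤ p ^ μ a := pow_nonneg hp0 _
    have hpm1 : p ^ μ a ≤ 1 := pow_le_one₀ hp0 hp1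
    have hpN0 : (0:ℝ) ≤ p ^ N := pow_nonneg hp0 _
    have hpN1 : p ^ N ≤ 1 := pow_le_one₀ hp0 hp1
    have h1 := pow_abs_sub_le p hp0 hp1 (x a) (y a) D (hx0 a) (hxp a) (hy0 a) (hyp a) (hD a) (μ a)
    have htri : |x a ^ μ a * A - y a ^ μ a * B| ≤
        |x a ^ μ a - y a ^ μ a| * B + x a ^ μ a * |A - B| := by
      have : x a ^ μ a * A - y a ^ μ a * B
          = (x a ^ μ a - y a ^ μ a) * B + x a ^ μ a * (A - B) := by ring
      rw [this]
      refine le_trans (abs_add_le _ _) ?_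
      rw [abs_mul, abs_mul, abs_of_nonneg hB0, abs_of_nonneg hxa]
    have hpow : p ^ (μ a + N) = p ^ μ a * p ^ N := pow_add p _ N
    calc |x a ^ μ a * A - y a ^ μ a * B| * (1 - p)
        ≤ (|x a ^ μ a - y a ^ μ a| * B + x a ^ μ a * |A - B|) * (1 - p) :=
          mul_le_mul_of_nonneg_right htri h1p
      _ = |x a ^ μ a - y a ^ μ a| * (1 - p) * B + x a ^ μ a * (|A - B| * (1 - p)) := by ring
      _ ≤ D * (1 - p ^ μ a) * p ^ N + p ^ μ a * (D * (1 - p ^ N)) := by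
          refine add_le_add ?_ (mul_le_mul hxap ih (by positivity) hpm0)
          exact mul_le_mul h1 hBp hB0 (mul_nonneg hD0 (sub_nonneg.2 hpm1))
      _ ≤ D * (1 - p ^ (μ a + N)) := by
          nlinarith [mul_nonneg (mul_nonneg hD0 (sub_nonneg.2 hpm1)) (sub_nonneg.2 hpN1)]

set_option maxHeartbeats 1000000 in
/-- Lipschitz property of a multivariate power series with nonnegative coefficients
summing to at most `1`: for `x, y` in the ball of radius `p < 1`,
`|f(x) − f(y)| ≤ (max_i (x_i − min(x_i,y_i)) + max_i (y_i − min(x_i,y_i)))/(1−p)`. -/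
theorem stmt11 (k : ℕ) (c : (Fin k →₀ ℕ) → ℝ≥0)
    (hc : ∑' μ : Fin k →₀ ℕ, (c μ : ℝ≥0∞) ≤ 1)
    (p : ℝ) (hp0 : 0 ≤ p) (hp1 : p < 1)
    (x y : Fin k → ℝ) (hx0 : ∀ i, 0 ≤ x i) (hy0 : ∀ i, 0 ≤ y i)
    (hxp : ∀ i, x i ≤ p) (hyp : ∀ i, y i ≤ p) :
    |(∑' μ : Fin k →₀ ℕ, (c μ : ℝ) * ∏ i : Fin k, x i ^ μ i) -
        ∑' μ : Fin k →₀ ℕ, (c μ : ℝ) * ∏ i : Fin k, y i ^ μ i| ≤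
      ((⨆ i : Fin k, (x i - min (x i) (y i))) +
        (⨆ i : Fin k, (y i - min (x i) (y i)))) / (1 - p) := by
  have h1p : (0:ℝ) < 1 - p := by linarith
  set A := ⨆ i : Fin k, (x i - min (x i) (y i)) with hA
  set B := ⨆ i : Fin k, (y i - min (x i) (y i)) with hB
  have hA0 : 0 ≤ A := Real.iSup_nonneg fun i => by
    simp [sub_nonneg, min_le_left]
  have hB0 : 0 ≤ B := Real.iSup_nonneg fun i => by
    simp [sub_nonneg, min_le_right]
  set D := A + B with hDdef
  have hD0 : 0 ≤ D := add_nonneg hA0 hB0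
  have hD : ∀ i, |x i - y i| ≤ D := by
    intro i
    have hxs : x i - min (x i) (y i) ≤ A :=
      le_ciSup (f := fun j => x j - min (x j) (y j)) (Set.Finite.bddAbove (Set.finite_range _)) i
    have hys : y i - min (x i) (y i) ≤ B :=
      le_ciSup (f := fun j => y j - min (x j) (y j)) (Set.Finite.bddAbove (Set.finite_range _)) i
    rcases le_total (x i) (y i) with h | h
    · rw [abs_of_nonpos (by linarith), min_eq_left h] at *
      linarith
    · rw [abs_of_nonneg (by linarith), min_eq_right h] at *
      linarith
  -- summability of coefficients
  have hcs : Summable (fun μ : Fin k →₀ ℕ => c μ) :=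
    ENNReal.tsum_coe_ne_top_iff_summable.mp (lt_of_le_of_lt hc ENNReal.one_lt_top).ne
  have hcsR : Summable (fun μ : Fin k →₀ ℕ => (c μ : ℝ)) := NNReal.summable_coe.mpr hcs
  have hcsum1 : (∑' μ : Fin k →₀ ℕ, (c μ : ℝ)) ≤ 1 := by
    have := (ENNReal.coe_le_one_iff (r := ∑' μ, c μ)).mp (by rwa [ENNReal.coe_tsum hcs])
    have h2 : (∑' μ : Fin k →₀ ℕ, (c μ : ℝ)) = ((∑' μ, c μ : ℝ≥0) : ℝ) :=
      (NNReal.coe_tsum (f := fun μ => c μ)).symm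
    rw [h2]
    exact_mod_cast this
  -- products are in [0,1]
  have hprod : ∀ (z : Fin k → ℝ), (∀ i, 0 ≤ z i) → (∀ i, z i ≤ p) →
      ∀ μ : Fin k →₀ ℕ, 0 ≤ (∏ i : Fin k, z i ^ μ i) ∧ (∏ i : Fin k, z i ^ μ i) ≤ 1 := by
    intro z hz0 hzp μ
    constructor
    · exact Finset.prod_nonneg fun i _ => pow_nonneg (hz0 i) _
    · exact Finset.prod_le_one (fun i _ => pow_nonneg (hz0 i) _)
        (fun i _ => pow_le_one₀ (hz0 i) (le_trans (hzp i) hp1.le))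
  set fx := fun μ : Fin k →₀ ℕ => (c μ : ℝ) * ∏ i : Fin k, x i ^ μ i with hfx
  set fy := fun μ : Fin k →₀ ℕ => (c μ : ℝ) * ∏ i : Fin k, y i ^ μ i with hfy
  have hsx : Summable fx := by
    refine Summable.of_nonneg_of_le (fun μ => mul_nonneg (c μ).coe_nonneg
      (hprod x hx0 hxp μ).1) (fun μ => ?_) hcsR
    simp only [hfx]
    nlinarith [(hprod x hx0 hxp μ).2, (c μ).coe_nonneg]
  have hsy : Summable fy := by
    refine Summable.of_nonneg_of_le (fun μ => mul_nonneg (c μ).coe_nonneg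
      (hprod y hy0 hyp μ).1) (fun μ => ?_) hcsR
    simp only [hfy]
    nlinarith [(hprod y hy0 hyp μ).2, (c μ).coe_nonneg]
  -- termwise bound
  have hterm : ∀ μ : Fin k →₀ ℕ, |fx μ - fy μ| ≤ (c μ : ℝ) * (D / (1 - p)) := by
    intro μ
    have hkey := prod_pow_abs_sub_le p hp0 hp1.le x y hx0 hy0 hxp hyp D hD0 hD
      (fun i => μ i) Finset.univ
    have hp1' : 1 - p ^ (∑ i : Fin k, μ i) ≤ 1 := by
      have : (0:ℝ) ≤ p ^ (∑ i : Fin k, μ i) := pow_nonneg hp0 _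
      linarith
    have hΔ : |(∏ i : Fin k, x i ^ μ i) - ∏ i : Fin k, y i ^ μ i| ≤ D / (1 - p) := by
      rw [le_div_iff₀ h1p]
      exact le_trans hkey (by nlinarith)
    rw [hfx, hfy]
    have : (c μ : ℝ) * ∏ i : Fin k, x i ^ μ i - (c μ : ℝ) * ∏ i : Fin k, y i ^ μ i
        = (c μ : ℝ) * ((∏ i : Fin k, x i ^ μ i) - ∏ i : Fin k, y i ^ μ i) := by ring
    rw [this, abs_mul, abs_of_nonneg (c μ).coe_nonneg]
    exact mul_le_mul_of_nonneg_left hΔ (c μ).coe_nonneg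
  have hsub : Summable (fun μ => |fx μ - fy μ|) :=
    Summable.of_nonneg_of_le (fun μ => abs_nonneg _) hterm (hcsR.mul_right _)
  calc |(∑' μ, fx μ) - ∑' μ, fy μ| = |∑' μ, (fx μ - fy μ)| := by rw [Summable.tsum_sub hsx hsy]
    _ ≤ ∑' μ, |fx μ - fy μ| := by
        have h := norm_tsum_le_tsum_norm (f := fun μ => fx μ - fy μ)
          (by simpa [Real.norm_eq_abs] using hsub)
        simpa [Real.norm_eq_abs] using h
    _ ≤ ∑' μ, (c μ : ℝ) * (D / (1 - p)) := Summable.tsum_le_tsum hterm hsub (hcsR.mul_right _)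
    _ = (∑' μ, (c μ : ℝ)) * (D / (1 - p)) := tsum_mul_right
    _ ≤ 1 * (D / (1 - p)) := by
        refine mul_le_mul_of_nonneg_right hcsum1 (by positivity)
    _ = D / (1 - p) := one_mul _
end

section
/- Let I be a set and N : (I → ℝ≥0) → ℝ≥0 a function that is monotone (u ≤ v pointwise implies N(u) ≤ N(v)) and subadditive (N(u + v) ≤ N(u) + N(v) for all u, v). For x, y : I → ℝ≥0 set D(x,y) = N(x − (x ⊓ y)) + N(y − (x ⊓ y)), where (x ⊓ y)(a) = min(x(a), y(a)) and subtraction is pointwise (well defined since x ⊓ y ≤ x and x ⊓ y ≤ y). Then D satisfies the triangle inequality: D(x,z) ≤ D(x,y) + D(y,z) for all x, y, z : I → ℝ≥0. -/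
open scoped NNReal

lemma key (a b c : ℝ≥0) : a - a ⊓ c ≤ (a - a ⊓ b) + (b - b ⊓ c) := by
  rcases le_total a b with h | h
  · rcases le_total b c with h' | h'
    · simp [inf_eq_left.2 (h.trans h'), inf_eq_left.2 h']
    · rcases le_total a c with h'' | h''
      · simp [inf_eq_left.2 h'']
      · rw [inf_eq_right.2 h'', inf_eq_left.2 h, inf_eq_right.2 h']
        simp only [tsub_self, zero_add]
        exact tsub_le_tsub h le_rfl
  · rcases le_total b c with h' | h'
    · rw [inf_eq_right.2 h, inf_eq_left.2 h']
      simp only [tsub_self, add_zero]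
      rcases le_total a c with h'' | h''
      · simp [inf_eq_left.2 h'']
      · rw [inf_eq_right.2 h'']
        exact tsub_le_tsub le_rfl h'
    · rw [inf_eq_right.2 h, inf_eq_right.2 h']
      rcases le_total a c with h'' | h''
      · simp [inf_eq_left.2 h'']
      · rw [inf_eq_right.2 h'']
        rw [tsub_add_tsub_cancel h h']

/-- If `N : (I → ℝ≥0) → ℝ≥0` is monotone and subadditive, then
`D(x,y) = N(x − x⊓y) + N(y − x⊓y)` satisfies the triangle inequality. -/
theorem stmt12 {I : Type*} (N : (I → ℝ≥0) → ℝ≥0)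
    (hmono : ∀ u v : I → ℝ≥0, u ≤ v → N u ≤ N v)
    (hsubadd : ∀ u v : I → ℝ≥0, N (u + v) ≤ N u + N v)
    (x y z : I → ℝ≥0) :
    N (x - x ⊓ z) + N (z - x ⊓ z) ≤
      (N (x - x ⊓ y) + N (y - x ⊓ y)) + (N (y - y ⊓ z) + N (z - y ⊓ z)) := by
  have h1 : N (x - x ⊓ z) ≤ N (x - x ⊓ y) + N (y - y ⊓ z) := by
    calc N (x - x ⊓ z) ≤ N ((x - x ⊓ y) + (y - y ⊓ z)) := by
          apply hmono; intro a; exact key (x a) (y a) (z a)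
      _ ≤ _ := hsubadd _ _
  have h2 : N (z - x ⊓ z) ≤ N (z - y ⊓ z) + N (y - x ⊓ y) := by
    calc N (z - x ⊓ z) ≤ N ((z - y ⊓ z) + (y - x ⊓ y)) := by
          apply hmono; intro a
          have := key (z a) (y a) (x a)
          simpa [inf_comm] using this
      _ ≤ _ := hsubadd _ _
  calc N (x - x ⊓ z) + N (z - x ⊓ z)
      ≤ (N (x - x ⊓ y) + N (y - y ⊓ z)) + (N (z - y ⊓ z) + N (y - x ⊓ y)) :=
        add_le_add h1 h2
    _ = _ := by ring
end

section
/- Let q ∈ (0,1] and u ∈ [0,1] be real numbers. Then (1 − √(1 − 4q(1−q)u²)) / (2q) is the least element of the set {x ∈ [0,1] | x = (1−q)·u² + q·x²}. (Note 4q(1−q)u² ≤ 1, so the square root is real.) -/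
/-- For `q ∈ (0,1]` and `u ∈ [0,1]`, the number `(1 − √(1 − 4q(1−q)u²))/(2q)` is the
least element of `{x ∈ [0,1] | x = (1−q)u² + qx²}`. -/
theorem stmt14 (q u : ℝ) (hq0 : 0 < q) (hq1 : q ≤ 1) (hu0 : 0 ≤ u) (hu1 : u ≤ 1) :
    IsLeast {x : ℝ | x ∈ Set.Icc (0 : ℝ) 1 ∧ x = (1 - q) * u ^ 2 + q * x ^ 2}
      ((1 - Real.sqrt (1 - 4 * q * (1 - q) * u ^ 2)) / (2 * q)) := by
  have hu2 : u ^ 2 ≤ 1 := by nlinarith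
  have hqq : 0 ≤ q * (1 - q) := mul_nonneg hq0.le (by linarith)
  have hD : 0 ≤ 1 - 4 * q * (1 - q) * u ^ 2 := by nlinarith [sq_nonneg (2*q - 1)]
  set s := Real.sqrt (1 - 4 * q * (1 - q) * u ^ 2) with hs
  have hs0 : 0 ≤ s := Real.sqrt_nonneg _
  have hs2 : s ^ 2 = 1 - 4 * q * (1 - q) * u ^ 2 := Real.sq_sqrt hD
  have hs1 : s ≤ 1 := by
    nlinarith [hs2, hs0, mul_nonneg hqq (sq_nonneg u)]
  have h2q : (0:ℝ) < 2 * q := by linarith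
  refine ⟨⟨⟨?_, ?_⟩, ?_⟩, ?_⟩
  · exact div_nonneg (by linarith) h2q.le
  · rw [div_le_one h2q]
    rcases le_or_gt 1 (2 * q) with h | h
    · linarith
    · have hle : 1 - 2 * q ≤ s := by
        rw [hs]
        rw [show (1:ℝ) - 2*q = Real.sqrt ((1 - 2*q)^2) by
          rw [Real.sqrt_sq (by linarith)]]
        exact Real.sqrt_le_sqrt (by nlinarith)
      linarith
  · field_simp
    nlinarith [hs2]
  · rintro x ⟨⟨hx0, hx1⟩, hxe⟩
    have h : (2*q*x - 1)^2 = s^2 := by rw [hs2]; linear_combination (-(4*q)) * hxe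
    rw [div_le_iff₀ h2q]
    nlinarith [h, hs0]
end

section
/- Let q ∈ (0,1] be a real number. Then the least element of the set {x ∈ [0,1] | x = (1−q) + q·x²} equals (1 − |2q − 1|)/(2q); equivalently, it equals 1 when q ≤ 1/2 and (1−q)/q when q ≥ 1/2. -/
/-!
The fixed-point equation `x = (1 - q) + q x²` factors as `(x - 1) (q x - (1 - q)) = 0`, so its
roots are `1` and `(1 - q) / q`. For `0 < q ≤ 1` both are nonnegative and `1` lies in `[0, 1]`,
so the least root in `[0, 1]` is `min 1 ((1 - q) / q)`, which is exactly `(1 - |2q - 1|) / (2q)`.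
-/

lemma eq_one_sub_add_mul_sq_iff {q x : ℝ} (hq : q ≠ 0) :
    x = (1 - q) + q * x ^ 2 ↔ x = 1 ∨ x = (1 - q) / q := by
  rw [eq_div_iff hq, ← sub_eq_zero (a := x) (b := 1), ← sub_eq_zero (a := x * q), ← mul_eq_zero]
  constructor <;> intro h <;> linear_combination -h

lemma one_le_one_sub_div_self_iff {q : ℝ} (hq : 0 < q) : 1 ≤ (1 - q) / q ↔ q ≤ 1 / 2 := by
  rw [le_div_iff₀ hq]
  constructor <;> intro h <;> linarith

lemma one_sub_div_self_le_one_iff {q : ℝ} (hq : 0 < q) : (1 - q) / q ≤ 1 ↔ 1 / 2 ≤ q := by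
  rw [div_le_iff₀ hq]
  constructor <;> intro h <;> linarith

lemma one_sub_abs_div_eq_min {q : ℝ} (hq : 0 < q) :
    (1 - |2 * q - 1|) / (2 * q) = min 1 ((1 - q) / q) := by
  rcases le_total q (1 / 2) with hle | hge
  · rw [min_eq_left ((one_le_one_sub_div_self_iff hq).2 hle), abs_of_nonpos (by linarith)]
    field_simp
    ring
  · rw [min_eq_right ((one_sub_div_self_le_one_iff hq).2 hge), abs_of_nonneg (by linarith)]
    field_simp
    ring

lemma isLeast_fixedPoints_Icc {q : ℝ} (hq0 : 0 < q) (hq1 : q ≤ 1) :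
    IsLeast {x : ℝ | x ∈ Set.Icc (0 : ℝ) 1 ∧ x = (1 - q) + q * x ^ 2} (min 1 ((1 - q) / q)) := by
  simp only [eq_one_sub_add_mul_sq_iff hq0.ne']
  have hr : 0 ≤ (1 - q) / q := div_nonneg (by linarith) hq0.le
  refine ⟨⟨⟨le_min zero_le_one hr, min_le_left _ _⟩, ?_⟩, ?_⟩
  · rcases min_choice 1 ((1 - q) / q) with h | h <;> simp [h]
  · rintro x ⟨-, rfl | rfl⟩
    exacts [min_le_left _ _, min_le_right _ _]

/-- For `q ∈ (0,1]`, the least element of `{x ∈ [0,1] | x = (1−q) + qx²}` is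
`(1 − |2q−1|)/(2q)`; equivalently, it is `1` for `q ≤ 1/2` and `(1−q)/q` for
`q ≥ 1/2`. -/
theorem stmt15 (q : ℝ) (hq0 : 0 < q) (hq1 : q ≤ 1) :
    IsLeast {x : ℝ | x ∈ Set.Icc (0 : ℝ) 1 ∧ x = (1 - q) + q * x ^ 2}
      ((1 - |2 * q - 1|) / (2 * q)) ∧
    (q ≤ 1 / 2 → (1 - |2 * q - 1|) / (2 * q) = 1) ∧
    (1 / 2 ≤ q → (1 - |2 * q - 1|) / (2 * q) = (1 - q) / q) := by
  rw [one_sub_abs_div_eq_min hq0]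
  exact ⟨isLeast_fixedPoints_Icc hq0 hq1,
    fun hle => min_eq_left ((one_le_one_sub_div_self_iff hq0).2 hle),
    fun hge => min_eq_right ((one_sub_div_self_le_one_iff hq0).2 hge)⟩
end

section
/- Let c : ℕ → ℝ≥0 with ∑_{n} c_n ≤ 1, and define f : ℝ≥0 → [0,∞] by f(x) = ∑_{n} c_n · x^n, the sum taken in [0,∞]. Then, as x → 1 from the left (x ∈ [0,1)), the quotient (f(1) − f(x)) / (1 − x) tends in [0,∞] to ∑_{n} n · c_n (which may be +∞). -/
/-!
For `x < 1`, the identity `1 - xⁿ = (1 - x)(1 + x + ⋯ + xⁿ⁻¹)` applied termwise (legitimate because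
`f(x) ≤ f(1) < ∞`) turns the difference quotient into `∑ₙ cₙ (1 + x + ⋯ + xⁿ⁻¹)`. Each term is at most
`n cₙ` and tends to it as `x → 1`, and in `[0,∞]` this forces the sums to converge to `∑ₙ n cₙ`:
finite partial sums give the lower bound, the termwise bound the upper one.
-/

open scoped NNReal ENNReal Topology

open Filter Finset

/-- The power series `f(x) = ∑ₙ cₙ xⁿ` (in `[0,∞]`) associated with coefficients
`c : ℕ → ℝ≥0`. -/
noncomputable def F (c : ℕ → ℝ≥0) (x : ℝ≥0) : ℝ≥0∞ :=
  ∑' n : ℕ, (c n : ℝ≥0∞) * (x : ℝ≥0∞) ^ n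

theorem ENNReal.tendsto_tsum_of_tendsto_of_le {α ι : Type*} {l : Filter α}
    {f : α → ι → ℝ≥0∞} {a : ι → ℝ≥0∞} (hf : ∀ i, Tendsto (f · i) l (𝓝 (a i)))
    (hle : ∀ᶠ x in l, ∀ i, f x i ≤ a i) :
    Tendsto (fun x => ∑' i, f x i) l (𝓝 (∑' i, a i)) := by
  refine tendsto_order.2 ⟨fun b hb => ?_, fun b hb => ?_⟩
  · rw [ENNReal.tsum_eq_iSup_sum] at hb
    obtain ⟨s, hs⟩ := lt_iSup_iff.1 hb
    filter_upwards [(tendsto_finsetSum s fun i _ => hf i).eventually_const_lt hs] with x hx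
    exact hx.trans_le (ENNReal.sum_le_tsum s)
  · filter_upwards [hle] with x hx
    exact (ENNReal.tsum_le_tsum hx).trans_lt hb

theorem ENNReal.one_sub_mul_geom_sum_coe {x : ℝ≥0} (hx : x ≤ 1) (n : ℕ) :
    (1 - (x : ℝ≥0∞)) * ∑ k ∈ range n, (x : ℝ≥0∞) ^ k = 1 - (x : ℝ≥0∞) ^ n := by
  have h := congrArg ((↑) : ℝ≥0 → ℝ≥0∞) (geom_sum_mul_of_le_one hx n)
  push_cast [ENNReal.coe_sub] at h
  rwa [mul_comm]

theorem ENNReal.geom_sum_coe_le {x : ℝ≥0} (hx : x ≤ 1) (n : ℕ) :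
    ∑ k ∈ range n, (x : ℝ≥0∞) ^ k ≤ n := by
  have hx' : (x : ℝ≥0∞) ≤ 1 := by exact_mod_cast hx
  simpa using sum_le_card_nsmul (range n) (fun k => (x : ℝ≥0∞) ^ k) 1 fun k _ => pow_le_one' hx' k

theorem ENNReal.tendsto_geom_sum_coe (n : ℕ) :
    Tendsto (fun x : ℝ≥0 => ∑ k ∈ range n, (x : ℝ≥0∞) ^ k) (𝓝 1) (𝓝 n) := by
  have : Continuous fun x : ℝ≥0 => ∑ k ∈ range n, (x : ℝ≥0∞) ^ k := by fun_prop
  simpa using this.tendsto 1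

theorem F_one_sub_F {c : ℕ → ℝ≥0} (hc : F c 1 ≠ ∞) {x : ℝ≥0} (hx : x ≤ 1) :
    F c 1 - F c x = (1 - (x : ℝ≥0∞)) * ∑' n, (c n : ℝ≥0∞) * ∑ k ∈ range n, (x : ℝ≥0∞) ^ k := by
  have hle : ∀ n, (c n : ℝ≥0∞) * (x : ℝ≥0∞) ^ n ≤ c n := fun n =>
    mul_le_of_le_one_right zero_le (pow_le_one' (by exact_mod_cast hx) n)
  have hF1 : F c 1 = ∑' n, (c n : ℝ≥0∞) := by simp [F]
  rw [hF1] at hc ⊢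
  rw [F, ← ENNReal.tsum_sub (ne_top_of_le_ne_top hc (ENNReal.tsum_le_tsum hle)) hle,
    ← ENNReal.tsum_mul_left]
  congr 1 with n
  rw [mul_left_comm, ENNReal.one_sub_mul_geom_sum_coe hx,
    ENNReal.mul_sub fun _ _ => ENNReal.coe_ne_top, mul_one]

theorem F_one_sub_F_div {c : ℕ → ℝ≥0} (hc : F c 1 ≠ ∞) {x : ℝ≥0} (hx : x < 1) :
    (F c 1 - F c x) / (1 - (x : ℝ≥0∞)) = ∑' n, (c n : ℝ≥0∞) * ∑ k ∈ range n, (x : ℝ≥0∞) ^ k := by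
  rw [F_one_sub_F hc hx.le, mul_comm, ENNReal.mul_div_cancel_right]
  · exact (tsub_pos_of_lt (by exact_mod_cast hx)).ne'
  · exact ENNReal.sub_ne_top ENNReal.one_ne_top

theorem tendsto_tsum_mul_geom_sum (c : ℕ → ℝ≥0) :
    Tendsto (fun x : ℝ≥0 => ∑' n, (c n : ℝ≥0∞) * ∑ k ∈ range n, (x : ℝ≥0∞) ^ k) (𝓝[≤] 1)
      (𝓝 (∑' n : ℕ, (n : ℝ≥0∞) * c n)) := by
  simp_rw [mul_comm (_ : ℝ≥0∞) (c _)]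
  refine ENNReal.tendsto_tsum_of_tendsto_of_le (fun n => ?_) ?_
  · exact (ENNReal.Tendsto.const_mul (ENNReal.tendsto_geom_sum_coe n)
      (Or.inr ENNReal.coe_ne_top)).mono_left nhdsWithin_le_nhds
  · filter_upwards [self_mem_nhdsWithin] with x hx n
    exact mul_le_mul_right (ENNReal.geom_sum_coe_le hx n) _

/-- If `∑ₙ cₙ ≤ 1`, then `(f(1) − f(x))/(1 − x)` tends in `[0,∞]` to `∑ₙ n·cₙ`
(possibly `+∞`) as `x → 1⁻`. -/
theorem stmt18 (c : ℕ → ℝ≥0) (hc : ∑' n : ℕ, (c n : ℝ≥0∞) ≤ 1) :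
    Filter.Tendsto (fun x : ℝ≥0 => (F c 1 - F c x) / (1 - (x : ℝ≥0∞)))
      (nhdsWithin 1 (Set.Iio 1)) (nhds (∑' n : ℕ, (n : ℝ≥0∞) * (c n : ℝ≥0∞))) := by
  have hF1 : F c 1 ≠ ∞ := by
    simpa [F] using ne_top_of_le_ne_top ENNReal.one_ne_top hc
  refine ((tendsto_tsum_mul_geom_sum c).mono_left
    (nhdsWithin_mono _ Set.Iio_subset_Iic_self)).congr' ?_
  filter_upwards [self_mem_nhdsWithin] with x hx
  exact (F_one_sub_F_div hF1 hx).symm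
end
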